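/- Let T be a plane tree with n non-root nodes, let α_ℓ be the number of nodes of T at depth ℓ, and s_ℓ = α_1 + ... + α_ℓ. Define a sequence b_0, ..., b_{n-1} by: b_0 = number of children of the root, and for 1 ≤ k ≤ n−1, writing k = s_ℓ − r with 0 ≤ r < α_ℓ, b_k = number of children of the (r+1)-st node of depth ℓ (nodes of the same depth ordered left to right). Then there is a unique Dyck path of size n whose number of north steps on the line x = k equals b_k for all 0 ≤ k ≤ n−1, and the resulting map Ξ_bounce from plane trees with n non-root nodes to Dyck paths of size n is a bijection. -/

import Mathlib

/-- A Dyck word: `true` is a north step, `false` an east step. -/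
def IsDyckWord (w : List Bool) : Prop :=
  (∀ p : List Bool, p <+: w → p.count false ≤ p.count true) ∧
    w.count true = w.count false

inductive PlaneTree where
  | node : List PlaneTree → PlaneTree

namespace PlaneTree

def childrenOf : PlaneTree → List PlaneTree
  | .node cs => cs

/-- number of children of the root -/
def arityOf (t : PlaneTree) : ℕ := t.childrenOf.length

def numNodes : PlaneTree → ℕ
  | .node cs => 1 + (cs.attach.map (fun c => numNodes c.1)).sum
decreasing_by have := List.sizeOf_lt_of_mem c.2; simp only [PlaneTree.node.sizeOf_spec]; omega

mutual
  /-- Dyck word of the clockwise contour walk of a plane tree: north (`true`) on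
  the first traversal of an edge, east (`false`) on the second; children are
  visited from right to left. -/
  def steepWord : PlaneTree → List Bool
    | .node cs => steepWordAux cs
  /-- contour word of a forest (left-to-right list of trees), walked clockwise,
  i.e. rightmost tree first. -/
  def steepWordAux : List PlaneTree → List Bool
    | [] => []
    | c :: rest => steepWordAux rest ++ (true :: (steepWord c ++ [false]))
end

end PlaneTree

namespace PlaneTree

/-- list of the nodes (subtrees) of `t` at depth `ℓ`, from left to right. -/
def level : PlaneTree → ℕ → List PlaneTree
  | t, 0 => [t]
  | .node cs, (ℓ + 1) => (cs.map (fun c => level c ℓ)).flatten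

/-- all nodes of `t` listed by increasing depth and, within each depth, from
right to left (so the `(r+1)`-st node of depth `ℓ`, counted from the left,
appears in position `s_ℓ - r` where `s_ℓ = α_1 + ⋯ + α_ℓ`). -/
def bfList (t : PlaneTree) : List PlaneTree :=
  ((List.range t.numNodes).map (fun ℓ => (level t ℓ).reverse)).flatten

end PlaneTree

/-- number of north steps of the Dyck word `w` on the vertical line `x = k`,
i.e. norths preceded by exactly `k` east steps. -/
def northsAt (w : List Bool) (k : ℕ) : ℕ :=
  ((List.range w.length).filter
    (fun i => (w.getD i false) && ((w.take i).count false == k))).length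

open PlaneTree

/-!
Read level by level, each level from right to left, a plane tree with `n + 1` nodes gives its
arity sequence `a₀, …, aₙ`. These sequences are exactly those with sum `n` and
`j < 1 + a₀ + ⋯ + a_{j-1}` for all `j` (the `j`-th node has been discovered, as the root or a
child of an earlier node, before its turn), and the tree is rebuilt from its sequence level by
level, the arities of one level cutting the next level into sibling groups. The condition forces
`aₙ = 0`, and for `a₀, …, a_{n-1}` it says precisely that `N^{a₀} E N^{a₁} E ⋯ N^{a_{n-1}} E`
stays weakly above the diagonal. So `Ξ_bounce` is a composite of three bijections, and a Dyck
path is determined by its numbers of north steps on the lines `x = k`.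
-/

@[simp] lemma northsAt_nil (k : ℕ) : northsAt [] k = 0 := rfl

@[simp] lemma northsAt_true_cons_zero (w : List Bool) :
    northsAt (true :: w) 0 = northsAt w 0 + 1 := by
  simp [northsAt, List.range_succ_eq_map, List.filter_map, Function.comp_def, Nat.add_comm]

@[simp] lemma northsAt_true_cons_succ (w : List Bool) (k : ℕ) :
    northsAt (true :: w) (k + 1) = northsAt w (k + 1) := by
  simp [northsAt, List.range_succ_eq_map, List.filter_map, Function.comp_def]

@[simp] lemma northsAt_false_cons_zero (w : List Bool) : northsAt (false :: w) 0 = 0 := by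
  simp [northsAt, List.range_succ_eq_map, List.filter_map, Function.comp_def]

@[simp] lemma northsAt_false_cons_succ (w : List Bool) (k : ℕ) :
    northsAt (false :: w) (k + 1) = northsAt w k := by
  simp [northsAt, List.range_succ_eq_map, List.filter_map, Function.comp_def]

def wordOfNorths (b : List ℕ) : List Bool :=
  b.flatMap fun a => List.replicate a true ++ [false]

@[simp] lemma wordOfNorths_nil : wordOfNorths [] = [] := rfl

lemma wordOfNorths_cons (a : ℕ) (b : List ℕ) :
    wordOfNorths (a :: b) = List.replicate a true ++ false :: wordOfNorths b := by
  simp [wordOfNorths]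

lemma wordOfNorths_append (b c : List ℕ) :
    wordOfNorths (b ++ c) = wordOfNorths b ++ wordOfNorths c := by
  simp [wordOfNorths]

@[simp] lemma count_true_wordOfNorths (b : List ℕ) : (wordOfNorths b).count true = b.sum := by
  induction b with
  | nil => rfl
  | cons a b ih => simp [wordOfNorths_cons, ih]

@[simp] lemma count_false_wordOfNorths (b : List ℕ) :
    (wordOfNorths b).count false = b.length := by
  induction b with
  | nil => rfl
  | cons a b ih => simp [wordOfNorths_cons, ih, List.count_replicate]

lemma length_wordOfNorths (b : List ℕ) : (wordOfNorths b).length = b.sum + b.length := by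
  rw [← List.count_true_add_count_false, count_true_wordOfNorths, count_false_wordOfNorths]

lemma northsAt_replicate_true_append (a : ℕ) (w : List Bool) (k : ℕ) :
    northsAt (List.replicate a true ++ w) k = northsAt w k + if k = 0 then a else 0 := by
  induction a with
  | zero => simp
  | succ a ih =>
    cases k with
    | zero =>
      rw [List.replicate_succ, List.cons_append, northsAt_true_cons_zero, ih, if_pos rfl,
        if_pos rfl]
      omega
    | succ k => simp [List.replicate_succ, ih]

lemma northsAt_wordOfNorths (b : List ℕ) (k : ℕ) : northsAt (wordOfNorths b) k = b.getD k 0 := by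
  induction b generalizing k with
  | nil => simp
  | cons a b ih => cases k <;> simp [wordOfNorths_cons, northsAt_replicate_true_append, ih]

lemma exists_eq_wordOfNorths_append_replicate (w : List Bool) :
    ∃ b c, w = wordOfNorths b ++ List.replicate c true := by
  induction w with
  | nil => exact ⟨[], 0, rfl⟩
  | cons x w ih =>
    obtain ⟨b, c, rfl⟩ := ih
    cases x with
    | false => exact ⟨0 :: b, c, by simp [wordOfNorths_cons]⟩
    | true =>
      cases b with
      | nil => exact ⟨[], c + 1, by simp [List.replicate_succ]⟩
      | cons a b => exact ⟨(a + 1) :: b, c, by simp [wordOfNorths_cons, List.replicate_succ]⟩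

lemma IsDyckWord.exists_eq_wordOfNorths {w : List Bool} (hw : IsDyckWord w) :
    ∃ b, w = wordOfNorths b := by
  obtain ⟨b, c, rfl⟩ := exists_eq_wordOfNorths_append_replicate w
  have hprefix : b.length ≤ b.sum := by simpa using hw.1 _ (List.prefix_append _ _)
  have hcount : b.sum + c = b.length := by simpa [List.count_replicate] using hw.2
  obtain rfl : c = 0 := by omega
  exact ⟨b, by simp⟩

lemma count_false_le_of_prefix_replicate_true_append {v : List Bool} {a c : ℕ}
    (hv : ∀ q, q <+: v → q.count false ≤ c + a + q.count true) :
    ∀ p, p <+: List.replicate a true ++ v → p.count false ≤ c + p.count true := by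
  induction a generalizing c with
  | zero => simpa using hv
  | succ a ih =>
    intro p hp
    rcases List.prefix_cons_iff.mp hp with rfl | ⟨q, rfl, hq⟩
    · simp
    · have := ih (c := c + 1) (fun q hq => by have := hv q hq; omega) q hq
      rw [List.count_cons_self, List.count_cons_of_ne (by decide)]
      omega

lemma count_false_le_of_prefix_wordOfNorths {b : List ℕ} {c : ℕ}
    (hb : ∀ m ≤ b.length, m ≤ c + (b.take m).sum) :
    ∀ p, p <+: wordOfNorths b → p.count false ≤ c + p.count true := by
  induction b generalizing c with
  | nil => simp
  | cons a b ih =>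
    have hca : 1 ≤ c + a := by simpa using hb 1 (by simp)
    have hb' : ∀ m ≤ b.length, m ≤ (c + a - 1) + (b.take m).sum := fun m hm => by
      have := hb (m + 1) (by simpa using hm)
      simp only [List.take_succ_cons, List.sum_cons] at this
      omega
    rw [wordOfNorths_cons]
    refine count_false_le_of_prefix_replicate_true_append fun q hq => ?_
    rcases List.prefix_cons_iff.mp hq with rfl | ⟨q', rfl, hq'⟩
    · simp
    · have := ih hb' q' hq'
      rw [List.count_cons_self, List.count_cons_of_ne (by decide)]
      omega

lemma isDyckWord_wordOfNorths_iff (b : List ℕ) :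
    IsDyckWord (wordOfNorths b) ↔ b.sum = b.length ∧ ∀ m ≤ b.length, m ≤ (b.take m).sum := by
  refine ⟨fun hw => ⟨by simpa using hw.2, fun m hm => ?_⟩,
    fun ⟨hsum, hb⟩ => ⟨?_, by simpa using hsum⟩⟩
  · have hprefix : wordOfNorths (b.take m) <+: wordOfNorths b := by
      conv_rhs => rw [← List.take_append_drop m b, wordOfNorths_append]
      exact List.prefix_append _ _
    simpa [hm] using hw.1 _ hprefix
  · simpa using count_false_le_of_prefix_wordOfNorths (c := 0) (by simpa using hb)

lemma leftInverse_wordOfNorths :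
    Function.LeftInverse (fun w => (List.range (w.count false)).map (northsAt w)) wordOfNorths :=
  fun b => List.ext_getElem (by simp) fun k _ hk => by
    simp [northsAt_wordOfNorths, List.getElem?_eq_getElem hk]

lemma wordOfNorths_injective : Function.Injective wordOfNorths :=
  leftInverse_wordOfNorths.injective

lemma IsDyckWord.eq_wordOfNorths {w : List Bool} {n : ℕ} (hw : IsDyckWord w)
    (hl : w.length = 2 * n) : w = wordOfNorths ((List.range n).map (northsAt w)) := by
  obtain ⟨b, rfl⟩ := hw.exists_eq_wordOfNorths
  have hlen : b.length = n := by
    have := ((isDyckWord_wordOfNorths_iff b).mp hw).1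
    rw [length_wordOfNorths] at hl
    omega
  congr 1
  rw [← hlen, ← count_false_wordOfNorths b]
  exact (leftInverse_wordOfNorths b).symm

lemma IsDyckWord.eq_of_northsAt_eq {w w' : List Bool} {n : ℕ} (hw : IsDyckWord w)
    (hw' : IsDyckWord w') (hl : w.length = 2 * n) (hl' : w'.length = 2 * n)
    (h : ∀ k < n, northsAt w k = northsAt w' k) : w = w' := by
  rw [hw.eq_wordOfNorths hl, hw'.eq_wordOfNorths hl',
    List.map_congr_left fun k hk => h k (List.mem_range.mp hk)]

/-- `b` lists the arities of the nodes of a forest with `m` roots in breadth-first order: the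
`j`-th node is a root or a child of one of the first `j` nodes. -/
def IsArityCode (m : ℕ) (b : List ℕ) : Prop :=
  b.sum + m = b.length ∧ ∀ j < b.length, j < m + (b.take j).sum

lemma isArityCode_zero_iff {b : List ℕ} : IsArityCode 0 b ↔ b = [] := by
  refine ⟨fun ⟨_, hb⟩ => ?_, fun h => by simp [h, IsArityCode]⟩
  by_contra hne
  simpa using hb 0 (List.length_pos_of_ne_nil hne)

lemma isArityCode_append_iff {m : ℕ} {c b : List ℕ} (hc : c.length = m) :
    IsArityCode m (c ++ b) ↔ IsArityCode c.sum b := by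
  subst hc
  simp only [IsArityCode, List.sum_append, List.length_append]
  refine and_congr (by omega) ⟨fun h j hj => ?_, fun h j hj => ?_⟩
  · have := h (c.length + j) (by omega)
    rw [List.take_append, List.take_of_length_le (by omega), List.sum_append] at this
    simpa using this
  · by_cases hjc : j < c.length
    · omega
    · obtain ⟨i, rfl⟩ := Nat.exists_eq_add_of_le (not_lt.mp hjc)
      rw [List.take_append, List.take_of_length_le (by omega), List.sum_append]
      simpa using h i (by omega)

lemma IsArityCode.dropLast_append_zero {m : ℕ} {b : List ℕ} (h : IsArityCode m b)
    (hb : b ≠ []) : b.dropLast ++ [0] = b := by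
  conv_rhs => rw [← List.dropLast_append_getLast hb]
  congr 2
  obtain ⟨hsum, hprefix⟩ := h
  have hlen := List.length_pos_of_ne_nil hb
  have hlast := hprefix (b.length - 1) (by omega)
  rw [← List.dropLast_eq_take] at hlast
  have hsplit : b.sum = b.dropLast.sum + b.getLast hb := by
    conv_lhs => rw [← List.dropLast_append_getLast hb]
    rw [List.sum_append, List.sum_singleton]
  omega

lemma isArityCode_one_append_zero_iff (c : List ℕ) :
    IsArityCode 1 (c ++ [0]) ↔ c.sum = c.length ∧ ∀ m ≤ c.length, m ≤ (c.take m).sum := by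
  simp only [IsArityCode, List.sum_append, List.length_append, List.sum_singleton,
    List.length_singleton]
  refine and_congr (by omega) ⟨fun h m hm => ?_, fun h j hj => ?_⟩
  · have := h m (by omega)
    rw [List.take_append_of_le_length hm] at this
    omega
  · rw [List.take_append_of_le_length (by omega)]
    have := h j (by omega)
    omega

namespace PlaneTree

def forestSize (f : List PlaneTree) : ℕ := (f.map numNodes).sum

@[simp] lemma forestSize_nil : forestSize [] = 0 := rfl

@[simp] lemma forestSize_cons (t : PlaneTree) (f : List PlaneTree) :
    forestSize (t :: f) = numNodes t + forestSize f := by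
  simp [forestSize]

@[simp] lemma forestSize_append (f g : List PlaneTree) :
    forestSize (f ++ g) = forestSize f + forestSize g := by
  simp [forestSize]

@[simp] lemma forestSize_reverse (f : List PlaneTree) : forestSize f.reverse = forestSize f := by
  simp [forestSize, List.sum_reverse]

lemma numNodes_node (cs : List PlaneTree) : numNodes (node cs) = forestSize cs + 1 := by
  rw [numNodes, List.attach_map_val, forestSize, Nat.add_comm]

lemma length_le_forestSize (f : List PlaneTree) : f.length ≤ forestSize f := by
  induction f with
  | nil => simp
  | cons t f ih =>
    obtain ⟨cs⟩ := t
    simp only [List.length_cons, forestSize_cons, numNodes_node]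
    omega

def nextLevel (f : List PlaneTree) : List PlaneTree :=
  f.flatMap fun t => t.childrenOf.reverse

@[simp] lemma nextLevel_nil : nextLevel [] = [] := rfl

@[simp] lemma nextLevel_cons (t : PlaneTree) (f : List PlaneTree) :
    nextLevel (t :: f) = t.childrenOf.reverse ++ nextLevel f := rfl

lemma forestSize_nextLevel (f : List PlaneTree) :
    forestSize (nextLevel f) + f.length = forestSize f := by
  induction f with
  | nil => rfl
  | cons t f ih =>
    obtain ⟨cs⟩ := t
    simp only [nextLevel_cons, childrenOf, forestSize_append, forestSize_reverse,
      List.length_cons, forestSize_cons, numNodes_node]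
    omega

lemma length_nextLevel (f : List PlaneTree) : (nextLevel f).length = (f.map arityOf).sum := by
  induction f with
  | nil => rfl
  | cons t f ih => simp [ih, arityOf]

lemma forestSize_nextLevel_le {f : List PlaneTree} {K : ℕ} (h : forestSize f ≤ K + 1) :
    forestSize (nextLevel f) ≤ K := by
  have := forestSize_nextLevel f
  rcases f with _ | ⟨t, f⟩
  · simp
  · simp only [List.length_cons] at this
    omega

def bfsUpTo (f : List PlaneTree) (K : ℕ) : List PlaneTree :=
  ((List.range K).map fun ℓ => nextLevel^[ℓ] f).flatten

@[simp] lemma bfsUpTo_zero (f : List PlaneTree) : bfsUpTo f 0 = [] := rfl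

lemma bfsUpTo_succ (f : List PlaneTree) (K : ℕ) :
    bfsUpTo f (K + 1) = f ++ bfsUpTo (nextLevel f) K := by
  rw [bfsUpTo, List.range_succ_eq_map, List.map_cons, List.map_map, List.flatten_cons]
  rfl

lemma eq_nil_of_forestSize_eq_zero {f : List PlaneTree} (h : forestSize f = 0) : f = [] :=
  List.eq_nil_of_length_eq_zero (by have := length_le_forestSize f; omega)

lemma length_bfsUpTo {f : List PlaneTree} {K : ℕ} (h : forestSize f ≤ K) :
    (bfsUpTo f K).length = forestSize f := by
  induction K generalizing f with
  | zero => simp [eq_nil_of_forestSize_eq_zero (Nat.le_zero.mp h)]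
  | succ K ih =>
    rw [bfsUpTo_succ, List.length_append, ih (forestSize_nextLevel_le h),
      ← forestSize_nextLevel f]
    omega

lemma isArityCode_bfsUpTo {f : List PlaneTree} {K : ℕ} (h : forestSize f ≤ K) :
    IsArityCode f.length ((bfsUpTo f K).map arityOf) := by
  induction K generalizing f with
  | zero => simp [eq_nil_of_forestSize_eq_zero (Nat.le_zero.mp h), IsArityCode]
  | succ K ih =>
    rw [bfsUpTo_succ, List.map_append, isArityCode_append_iff (List.length_map _),
      ← length_nextLevel]
    exact ih (forestSize_nextLevel_le h)

def buildLevel : List ℕ → List PlaneTree → List PlaneTree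
  | [], _ => []
  | a :: c, g => node (g.take a).reverse :: buildLevel c (g.drop a)

lemma length_buildLevel (c : List ℕ) (g : List PlaneTree) :
    (buildLevel c g).length = c.length := by
  induction c generalizing g with
  | nil => rfl
  | cons a c ih => simp [buildLevel, ih]

lemma nextLevel_buildLevel {c : List ℕ} {g : List PlaneTree} (h : c.sum = g.length) :
    nextLevel (buildLevel c g) = g := by
  induction c generalizing g with
  | nil => exact (List.eq_nil_of_length_eq_zero h.symm).symm
  | cons a c ih =>
    rw [List.sum_cons] at h
    rw [buildLevel, nextLevel_cons, childrenOf, List.reverse_reverse,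
      ih (by rw [List.length_drop]; omega), List.take_append_drop]

lemma map_arityOf_buildLevel {c : List ℕ} {g : List PlaneTree} (h : c.sum = g.length) :
    (buildLevel c g).map arityOf = c := by
  induction c generalizing g with
  | nil => rfl
  | cons a c ih =>
    rw [List.sum_cons] at h
    rw [buildLevel, List.map_cons, ih (by rw [List.length_drop]; omega)]
    congr 1
    simp only [arityOf, childrenOf, List.length_reverse, List.length_take]
    omega

lemma buildLevel_map_arityOf_nextLevel (f : List PlaneTree) :
    buildLevel (f.map arityOf) (nextLevel f) = f := by
  induction f with
  | nil => rfl
  | cons t f ih =>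
    obtain ⟨cs⟩ := t
    have hlen : ((node cs).childrenOf.reverse).length = arityOf (node cs) := by simp [arityOf]
    rw [List.map_cons, nextLevel_cons, buildLevel, List.take_left' hlen, List.drop_left' hlen,
      ih, List.reverse_reverse]
    rfl

/-- `m` is the number of roots, `K` bounds the depth. -/
def forestOfCode : ℕ → ℕ → List ℕ → List PlaneTree
  | 0, _, _ => []
  | K + 1, m, b => buildLevel (b.take m) (forestOfCode K (b.take m).sum (b.drop m))

lemma forestOfCode_spec {K m : ℕ} {b : List ℕ} (h : IsArityCode m b) (hK : b.length ≤ K) :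
    (forestOfCode K m b).length = m ∧ forestSize (forestOfCode K m b) = b.length ∧
      (bfsUpTo (forestOfCode K m b) K).map arityOf = b := by
  induction K generalizing m b with
  | zero =>
    obtain rfl := List.eq_nil_of_length_eq_zero (Nat.le_zero.mp hK)
    obtain rfl : m = 0 := by simpa [IsArityCode] using h.1
    simp [forestOfCode]
  | succ K ih =>
    have hm : m ≤ b.length := by have := h.1; omega
    have hc : (b.take m).length = m := by simp [hm]
    rw [← List.take_append_drop m b, isArityCode_append_iff hc] at h
    have hrest : (b.drop m).length ≤ K := by
      rcases m with _ | m
      · simp [isArityCode_zero_iff.mp h]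
      · simp only [List.length_drop]; omega
    obtain ⟨hlen, hsize, hcode⟩ := ih h hrest
    have hg : (b.take m).sum = (forestOfCode K (b.take m).sum (b.drop m)).length := hlen.symm
    refine ⟨by rw [forestOfCode, length_buildLevel, hc], ?_, ?_⟩
    · rw [forestOfCode, ← forestSize_nextLevel, nextLevel_buildLevel hg, hsize,
        length_buildLevel, hc, List.length_drop]
      omega
    · rw [forestOfCode, bfsUpTo_succ, nextLevel_buildLevel hg, List.map_append,
        map_arityOf_buildLevel hg, hcode, List.take_append_drop]

lemma forestOfCode_bfsUpTo {f : List PlaneTree} {K : ℕ} (h : forestSize f ≤ K) :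
    forestOfCode K f.length ((bfsUpTo f K).map arityOf) = f := by
  induction K generalizing f with
  | zero => simp [eq_nil_of_forestSize_eq_zero (Nat.le_zero.mp h), forestOfCode]
  | succ K ih =>
    have hlen : (f.map arityOf).length = f.length := List.length_map _
    rw [bfsUpTo_succ, List.map_append, forestOfCode, List.take_left' hlen, List.drop_left' hlen,
      ← length_nextLevel, ih (forestSize_nextLevel_le h), buildLevel_map_arityOf_nextLevel]

lemma level_succ (t : PlaneTree) (ℓ : ℕ) :
    level t (ℓ + 1) = t.childrenOf.flatMap fun c => level c ℓ := by
  obtain ⟨cs⟩ := t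
  rw [level, List.flatMap_def]
  rfl

lemma reverse_flatMap_level (ℓ : ℕ) (g : List PlaneTree) :
    (g.flatMap fun t => level t ℓ).reverse = nextLevel^[ℓ] g.reverse := by
  induction ℓ generalizing g with
  | zero => simp [level]
  | succ ℓ ih =>
    simp_rw [level_succ]
    rw [← List.flatMap_assoc, ih, Function.iterate_succ_apply, nextLevel, List.reverse_flatMap]
    rfl

lemma bfList_eq_bfsUpTo (t : PlaneTree) : bfList t = bfsUpTo [t] (numNodes t) := by
  rw [bfList, bfsUpTo]
  congr 1
  refine List.map_congr_left fun ℓ _ => ?_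
  simpa using reverse_flatMap_level ℓ [t]

lemma length_bfList (t : PlaneTree) : (bfList t).length = numNodes t := by
  rw [bfList_eq_bfsUpTo, length_bfsUpTo (by simp)]
  simp

lemma isArityCode_map_arityOf_bfList (t : PlaneTree) :
    IsArityCode 1 ((bfList t).map arityOf) := by
  rw [bfList_eq_bfsUpTo]
  exact isArityCode_bfsUpTo (f := [t]) (by simp)

lemma forestOfCode_map_arityOf_bfList (t : PlaneTree) :
    forestOfCode (numNodes t) 1 ((bfList t).map arityOf) = [t] := by
  rw [bfList_eq_bfsUpTo]
  exact forestOfCode_bfsUpTo (f := [t]) (by simp)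

lemma bijOn_map_arityOf_bfList (N : ℕ) :
    Set.BijOn (fun t => (bfList t).map arityOf) {t | numNodes t = N}
      {b | IsArityCode 1 b ∧ b.length = N} := by
  refine ⟨fun t (ht : numNodes t = N) => ?_,
    fun t (ht : numNodes t = N) t' (ht' : numNodes t' = N) h => ?_, fun b ⟨hb, hlen⟩ => ?_⟩
  · exact ⟨isArityCode_map_arityOf_bfList t, by rw [List.length_map, length_bfList, ht]⟩
  · have := forestOfCode_map_arityOf_bfList t
    rw [ht, show (bfList t).map arityOf = (bfList t').map arityOf from h, ← ht',
      forestOfCode_map_arityOf_bfList] at this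
    exact (List.singleton_inj.mp this).symm
  · obtain ⟨hlen1, hsize, hcode⟩ := forestOfCode_spec hb (le_of_eq hlen)
    obtain ⟨t, ht⟩ := List.length_eq_one_iff.mp hlen1
    rw [ht, hlen, forestSize_cons, forestSize_nil, Nat.add_zero] at hsize
    refine ⟨t, hsize, ?_⟩
    rwa [ht, ← hsize, ← bfList_eq_bfsUpTo] at hcode

end PlaneTree

lemma bijOn_dropLast (n : ℕ) :
    Set.BijOn List.dropLast {b | IsArityCode 1 b ∧ b.length = n + 1}
      {c | IsArityCode 1 (c ++ [0]) ∧ c.length = n} := by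
  refine ⟨fun b ⟨hb, hlen⟩ => ?_, fun b ⟨hb, hlen⟩ b' ⟨hb', hlen'⟩ h => ?_, fun c hc => ?_⟩
  · have hne : b ≠ [] := List.ne_nil_of_length_pos (by omega)
    exact ⟨(hb.dropLast_append_zero hne).symm ▸ hb, by simp [hlen]⟩
  · rw [← hb.dropLast_append_zero (List.ne_nil_of_length_pos (by omega)),
      ← hb'.dropLast_append_zero (List.ne_nil_of_length_pos (by omega)), h]
  · exact ⟨c ++ [0], ⟨hc.1, by simp [hc.2]⟩, List.dropLast_concat⟩

lemma bijOn_wordOfNorths (n : ℕ) :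
    Set.BijOn wordOfNorths {c | IsArityCode 1 (c ++ [0]) ∧ c.length = n}
      {w | IsDyckWord w ∧ w.length = 2 * n} := by
  refine ⟨fun c ⟨hc, hlen⟩ => ?_, wordOfNorths_injective.injOn, fun w ⟨hw, hl⟩ => ?_⟩
  · rw [isArityCode_one_append_zero_iff, ← isDyckWord_wordOfNorths_iff] at hc
    refine ⟨hc, ?_⟩
    rw [length_wordOfNorths, ((isDyckWord_wordOfNorths_iff c).mp hc).1, hlen]
    omega
  · have heq := hw.eq_wordOfNorths hl
    refine ⟨_, ⟨?_, by simp⟩, heq.symm⟩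
    rw [heq] at hw
    rwa [isArityCode_one_append_zero_iff, ← isDyckWord_wordOfNorths_iff]

namespace PlaneTree

def bounceWord (t : PlaneTree) : List Bool := wordOfNorths ((bfList t).map arityOf).dropLast

lemma bijOn_bounceWord (n : ℕ) :
    Set.BijOn bounceWord {t | numNodes t = n + 1} {w | IsDyckWord w ∧ w.length = 2 * n} :=
  (bijOn_wordOfNorths n).comp ((bijOn_dropLast n).comp (bijOn_map_arityOf_bfList (n + 1)))

lemma northsAt_bounceWord {t : PlaneTree} {k : ℕ} (hk : k + 1 < numNodes t) :
    northsAt (bounceWord t) k = arityOf ((bfList t).getD k (node [])) := by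
  have hlen := length_bfList t
  rw [bounceWord, northsAt_wordOfNorths, List.getD_eq_getElem _ _ (by simp [hlen]; omega),
    List.getElem_dropLast, List.getElem_map, List.getD_eq_getElem _ _ (by omega)]

end PlaneTree

/-- **`Ξ_bounce` is well-defined and a bijection.** For a plane tree `T` with
`n` non-root nodes, let `b_k` be the number of children of the `k`-th node of
`T` in the order of increasing depth (within a depth, as prescribed by
`k = s_ℓ - r`, the node being the `(r+1)`-st of depth `ℓ` from the left).
There is a unique Dyck path of size `n` having exactly `b_k` north steps on
`x = k` for all `0 ≤ k ≤ n-1`, and the resulting map from plane trees with `n`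
non-root nodes to Dyck paths of size `n` is a bijection. -/
theorem bounce_bijection (n : ℕ) :
    (∀ t : PlaneTree, numNodes t = n + 1 →
      ∃! w : List Bool, IsDyckWord w ∧ w.length = 2 * n ∧
        ∀ k < n, northsAt w k = arityOf ((bfList t).getD k (.node []))) ∧
    ∃ Ξ : PlaneTree → List Bool,
      (∀ t : PlaneTree, numNodes t = n + 1 →
        IsDyckWord (Ξ t) ∧ (Ξ t).length = 2 * n ∧
          ∀ k < n, northsAt (Ξ t) k = arityOf ((bfList t).getD k (.node []))) ∧
      Set.BijOn Ξ {t : PlaneTree | numNodes t = n + 1}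
        {w : List Bool | IsDyckWord w ∧ w.length = 2 * n} := by
  have hbij := bijOn_bounceWord n
  have hspec : ∀ t : PlaneTree, numNodes t = n + 1 →
      IsDyckWord (bounceWord t) ∧ (bounceWord t).length = 2 * n ∧
        ∀ k < n, northsAt (bounceWord t) k = arityOf ((bfList t).getD k (.node [])) :=
    fun t ht => ⟨(hbij.mapsTo ht).1, (hbij.mapsTo ht).2,
      fun k hk => northsAt_bounceWord (by omega)⟩
  refine ⟨fun t ht => ⟨bounceWord t, hspec t ht, ?_⟩, bounceWord, hspec, hbij⟩
  rintro w ⟨hw, hl, hnorths⟩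
  obtain ⟨hw', hl', hnorths'⟩ := hspec t ht
  exact hw.eq_of_northsAt_eq hw' hl hl' fun k hk => (hnorths k hk).trans (hnorths' k hk).symm
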